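/- If (e_n) is K-quasi-greedy and D-w-democratic in a real Banach space, then for any x and m, ||x − G_m(x)|| ≤ C(K,D) σ^w_{w(Λ_m)/2}(x), where Λ_m is the greedy set of G_m(x) and σ^w_u(x) is the best approximation error over sets of w-measure ≤ u with arbitrary coefficients. -/

import Mathlib

open Finset Filter

section Defs

variable {X : Type*} [NormedAddCommGroup X] [NormedSpace ℝ X]

/-- `wsum w A` is the `w`-measure of the finite set `A`. -/
def wsum (w : ℕ → ℝ) (A : Finset ℕ) : ℝ := ∑ i ∈ A, w i

/-- `e` is a normalized (Schauder) basis with biorthogonal functionals `E`. -/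
def NormalizedBasis (e : ℕ → X) (E : ℕ → X →L[ℝ] ℝ) : Prop :=
  (∀ n, ‖e n‖ = 1) ∧ (∀ n m, E n (e m) = if n = m then (1:ℝ) else 0) ∧
  ∀ x : X, Filter.Tendsto (fun N => ∑ n ∈ Finset.range N, E n x • e n)
    Filter.atTop (nhds x)

/-- `Λ` is a greedy set for `x`: every coefficient inside dominates every one outside. -/
def GreedySet (E : ℕ → X →L[ℝ] ℝ) (x : X) (Λ : Finset ℕ) : Prop :=
  ∀ n ∈ Λ, ∀ k, k ∉ Λ → |E k x| ≤ |E n x|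

/-- quasi-greedy with constant `K`. -/
def QuasiGreedy (e : ℕ → X) (E : ℕ → X →L[ℝ] ℝ) (K : ℝ) : Prop :=
  ∀ (x : X) (Λ : Finset ℕ), GreedySet E x Λ → ‖∑ n ∈ Λ, E n x • e n‖ ≤ K * ‖x‖

/-- `w`-almost greedy with constant `K`. -/
def WAlmostGreedy (w : ℕ → ℝ) (e : ℕ → X) (E : ℕ → X →L[ℝ] ℝ) (K : ℝ) : Prop :=
  ∀ (x : X) (Λ : Finset ℕ), GreedySet E x Λ →
    ∀ A : Finset ℕ, wsum w A ≤ wsum w Λ →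
      ‖x - ∑ n ∈ Λ, E n x • e n‖ ≤ K * ‖x - ∑ n ∈ A, E n x • e n‖

/-- `w`-democratic with constant `D`. -/
def WDemocratic (w : ℕ → ℝ) (e : ℕ → X) (D : ℝ) : Prop :=
  ∀ A B : Finset ℕ, wsum w A ≤ wsum w B →
    ‖∑ n ∈ A, e n‖ ≤ D * ‖∑ n ∈ B, e n‖

/-- best `m`-term (weighted) approximation error. -/
noncomputable def sigmaW (w : ℕ → ℝ) (e : ℕ → X) (u : ℝ) (x : X) : ℝ :=
  sInf {r | ∃ (A : Finset ℕ) (c : ℕ → ℝ), wsum w A ≤ u ∧ r = ‖x - ∑ n ∈ A, c n • e n‖}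

/-- expansional best (weighted) approximation error. -/
noncomputable def sigmaTildeW (w : ℕ → ℝ) (e : ℕ → X) (E : ℕ → X →L[ℝ] ℝ)
    (u : ℝ) (x : X) : ℝ :=
  sInf {r | ∃ A : Finset ℕ, wsum w A ≤ u ∧ r = ‖x - ∑ n ∈ A, E n x • e n‖}

/-- weighted fundamental function `φ^w`. -/
noncomputable def phiW (w : ℕ → ℝ) (e : ℕ → X) (u : ℝ) : ℝ :=
  sSup {r | ∃ A : Finset ℕ, wsum w A ≤ u ∧ r = ‖∑ n ∈ A, e n‖}

/-- the companion function `φ̂^w`. -/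
noncomputable def phiHatW (w : ℕ → ℝ) (e : ℕ → X) (v : ℝ) : ℝ :=
  sInf {r | ∃ A : Finset ℕ, v < wsum w A ∧ r = ‖∑ n ∈ A, e n‖}

/-- `w`-semi-greedy with constant `K`: some Chebyshev approximant on each greedy set
realizes the bound. -/
def WSemiGreedy (w : ℕ → ℝ) (e : ℕ → X) (E : ℕ → X →L[ℝ] ℝ) (K : ℝ) : Prop :=
  ∀ (x : X) (Λ : Finset ℕ), GreedySet E x Λ →
    ∃ c : ℕ → ℝ, ‖x - ∑ n ∈ Λ, c n • e n‖ ≤ K * sigmaW w e (wsum w Λ) x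

/-- a sequence of signs. -/
def SignVec (ε : ℕ → ℝ) : Prop := ∀ n, ε n = 1 ∨ ε n = -1

/-- `w`-superdemocratic with constant `D`. -/
def WSuperDemocratic (w : ℕ → ℝ) (e : ℕ → X) (D : ℝ) : Prop :=
  ∀ A B : Finset ℕ, wsum w A ≤ wsum w B → ∀ ε δ : ℕ → ℝ, SignVec ε → SignVec δ →
    ‖∑ n ∈ A, ε n • e n‖ ≤ D * ‖∑ n ∈ B, δ n • e n‖

/-- `β` bounds the partial-sum projections (basis constant bound). -/
def BasisConstBound (e : ℕ → X) (E : ℕ → X →L[ℝ] ℝ) (β : ℝ) : Prop :=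
  ∀ (x : X) (N : ℕ), ‖∑ n ∈ Finset.range N, E n x • e n‖ ≤ β * ‖x‖

/-- equivalence to the unit vector basis of `c₀`. -/
def EquivC0 (e : ℕ → X) : Prop :=
  ∃ c C : ℝ, 0 < c ∧ ∀ (A : Finset ℕ) (a : ℕ → ℝ),
    (∀ n ∈ A, c * |a n| ≤ ‖∑ m ∈ A, a m • e m‖) ∧
    (∀ M : ℝ, (∀ n ∈ A, |a n| ≤ M) → ‖∑ n ∈ A, a n • e n‖ ≤ C * M)

/-- conservative with constant `C`. -/
def Conservative (e : ℕ → X) (C : ℝ) : Prop :=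
  ∀ A B : Finset ℕ, A.card ≤ B.card → (∀ a ∈ A, ∀ b ∈ B, a < b) →
    ‖∑ n ∈ A, e n‖ ≤ C * ‖∑ n ∈ B, e n‖

/-- `X` has finite cotype. -/
def FiniteCotype (X : Type*) [NormedAddCommGroup X] [NormedSpace ℝ X] : Prop :=
  ∃ (q C : ℝ), 2 ≤ q ∧ 0 < C ∧ ∀ (n : ℕ) (x : Fin n → X),
    (∑ j, ‖x j‖ ^ q) ^ (1/q) ≤
      C * ((∑ ε : Fin n → Bool,
        ‖∑ j, (if ε j then (1:ℝ) else -1) • x j‖ ^ q) / 2 ^ n) ^ (1/q)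

end Defs

/-!
Let `t` be the smallest coefficient of `x` on `Λ`, and `z = x - ∑_{n ∈ A} c n • e n` a
competitor error with `w(A) ≤ w(Λ)/2`, hence `w(A) ≤ w(Λ \ A)`. The set `Γ` of `n ∈ Λ ∪ A` with
`t ≤ |E n z|` is greedy for `z` and contains `Λ \ A`, and, writing
`P_S y = ∑_{n ∈ S} E n y • e n`,
`x - P_Λ x = (z - P_Γ z) - P_{(Λ ∪ A) \ Γ} z + P_{A \ Λ} x`.
Quasi-greediness bounds the first term by `(1 + K) ‖z‖`. The other two have coefficients at most
`t` on sets of weight at most `w(Λ \ A)`; by convexity and democracy each is at most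
`2 D t ‖∑_{Λ \ A} e n‖`, and `t ‖∑_{Λ \ A} e n‖ ≤ 4 K² ‖z‖` by truncating `z` at level `t`
on `Γ`.
-/

section GreedyBound

variable {X : Type*} [NormedAddCommGroup X] [NormedSpace ℝ X]
  {e : ℕ → X} {E : ℕ → X →L[ℝ] ℝ} {w : ℕ → ℝ} {K D : ℝ}

def Biorthogonal (e : ℕ → X) (E : ℕ → X →L[ℝ] ℝ) : Prop :=
  ∀ n m, E n (e m) = if n = m then (1:ℝ) else 0

theorem NormalizedBasis.biorthogonal (h : NormalizedBasis e E) : Biorthogonal e E := h.2.1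

theorem Biorthogonal.apply_sum (hb : Biorthogonal e E) (A : Finset ℕ) (a : ℕ → ℝ) (k : ℕ) :
    E k (∑ n ∈ A, a n • e n) = if k ∈ A then a k else 0 := by
  simp only [map_sum, map_smul, hb k, smul_eq_mul, mul_ite, mul_one, mul_zero]
  exact Finset.sum_ite_eq A k a

theorem Biorthogonal.sum_apply_sum_of_subset (hb : Biorthogonal e E) {A U : Finset ℕ}
    (hAU : A ⊆ U) (a : ℕ → ℝ) :
    ∑ n ∈ U, E n (∑ m ∈ A, a m • e m) • e n = ∑ n ∈ A, a n • e n := by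
  simp only [hb.apply_sum, ite_smul, zero_smul]
  rw [← Finset.sum_filter, Finset.filter_mem_eq_inter, Finset.inter_eq_right.2 hAU]

theorem Biorthogonal.ne_zero (hb : Biorthogonal e E) (n : ℕ) : e n ≠ 0 := by
  intro h
  simpa [h] using hb n n

theorem QuasiGreedy.one_le (hQG : QuasiGreedy e E K) (hb : Biorthogonal e E) : 1 ≤ K := by
  have hgreedy : GreedySet E (e 0) {0} := by
    intro n hn k hk
    rw [Finset.mem_singleton] at hn hk
    simp [hb k 0, hn, hk]
  have h := hQG (e 0) {0} hgreedy
  rw [Finset.sum_singleton, hb 0 0, if_pos rfl, one_smul] at h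
  exact le_of_mul_le_mul_right (by rwa [one_mul]) (norm_pos_iff.2 (hb.ne_zero 0))

theorem WDemocratic.one_le (hD : WDemocratic w e D) (hb : Biorthogonal e E) : 1 ≤ D := by
  have h := hD {0} {0} le_rfl
  rw [Finset.sum_singleton] at h
  exact le_of_mul_le_mul_right (by rwa [one_mul]) (norm_pos_iff.2 (hb.ne_zero 0))

theorem wsum_nonneg (hw : ∀ i, 0 ≤ w i) (A : Finset ℕ) : 0 ≤ wsum w A :=
  Finset.sum_nonneg fun i _ => hw i

theorem wsum_mono (hw : ∀ i, 0 ≤ w i) {A B : Finset ℕ} (h : A ⊆ B) : wsum w A ≤ wsum w B :=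
  Finset.sum_le_sum_of_subset_of_nonneg h fun i _ _ => hw i

theorem wsum_le_wsum_sdiff_of_le_half (hw : ∀ i, 0 ≤ w i) {A Λ : Finset ℕ}
    (h : wsum w A ≤ wsum w Λ / 2) : wsum w A ≤ wsum w (Λ \ A) := by
  have hsplit : wsum w (Λ ∩ A) + wsum w (Λ \ A) = wsum w Λ :=
    Finset.sum_inter_add_sum_sdiff Λ A w
  linarith [wsum_mono hw (Finset.inter_subset_right : Λ ∩ A ⊆ A)]

theorem norm_add_smul_le_max (u g : X) {b t : ℝ} (hb : 0 ≤ b) (hbt : b ≤ t) :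
    ‖u + b • g‖ ≤ max ‖u‖ ‖u + t • g‖ := by
  rcases hbt.eq_or_lt with rfl | hbt
  · exact le_max_right _ _
  have ht : 0 < t := hb.trans_lt hbt
  have hcombo : u + b • g = (1 - b / t) • u + (b / t) • (u + t • g) := by
    rw [smul_add, smul_smul, div_mul_cancel₀ b ht.ne']
    module
  rw [hcombo]
  exact convexOn_univ_norm.le_on_segment' (Set.mem_univ _) (Set.mem_univ _)
    (sub_nonneg.2 ((div_le_one ht).2 hbt.le)) (div_nonneg hb ht.le) (sub_add_cancel _ _)

theorem exists_subset_norm_add_sum_smul_le (e : ℕ → X) (u : X) {S : Finset ℕ} {f : ℕ → ℝ}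
    {t : ℝ} (hf : ∀ n ∈ S, 0 ≤ f n ∧ f n ≤ t) :
    ∃ B ⊆ S, ‖u + ∑ n ∈ S, f n • e n‖ ≤ ‖u + t • ∑ n ∈ B, e n‖ := by
  induction S using Finset.induction_on generalizing u with
  | empty => exact ⟨∅, subset_rfl, by simp⟩
  | @insert k S hk ih =>
    obtain ⟨B, hBS, hB⟩ := ih (u + f k • e k) fun n hn => hf n (Finset.mem_insert_of_mem hn)
    obtain ⟨hfk0, hfkt⟩ := hf k (Finset.mem_insert_self k S)
    have hmax := norm_add_smul_le_max (u + t • ∑ n ∈ B, e n) (e k) hfk0 hfkt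
    have hstep : ‖u + ∑ n ∈ insert k S, f n • e n‖ ≤
        ‖u + t • ∑ n ∈ B, e n + f k • e k‖ := by
      calc ‖u + ∑ n ∈ insert k S, f n • e n‖ = ‖u + f k • e k + ∑ n ∈ S, f n • e n‖ := by
            rw [Finset.sum_insert hk, add_assoc]
        _ ≤ ‖u + f k • e k + t • ∑ n ∈ B, e n‖ := hB
        _ = ‖u + t • ∑ n ∈ B, e n + f k • e k‖ := by rw [add_right_comm]
    rcases le_max_iff.1 (hstep.trans hmax) with h | h
    · exact ⟨B, hBS.trans (Finset.subset_insert k S), h⟩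
    · refine ⟨insert k B, Finset.insert_subset_insert k hBS, ?_⟩
      rwa [Finset.sum_insert fun hkB => hk (hBS hkB), smul_add, add_comm (t • e k), ← add_assoc]

theorem WDemocratic.norm_sum_smul_le (hD : WDemocratic w e D) (hw : ∀ i, 0 ≤ w i) {t : ℝ}
    (ht : 0 ≤ t) {S T : Finset ℕ} {f : ℕ → ℝ} (hf : ∀ n ∈ S, |f n| ≤ t)
    (hST : wsum w S ≤ wsum w T) :
    ‖∑ n ∈ S, f n • e n‖ ≤ 2 * D * t * ‖∑ n ∈ T, e n‖ := by
  have hpart : ∀ g : ℕ → ℝ, (∀ n ∈ S, 0 ≤ g n ∧ g n ≤ t) →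
      ‖∑ n ∈ S, g n • e n‖ ≤ D * t * ‖∑ n ∈ T, e n‖ := by
    intro g hg
    obtain ⟨B, hBS, hB⟩ := exists_subset_norm_add_sum_smul_le e 0 hg
    rw [zero_add, zero_add, norm_smul, Real.norm_of_nonneg ht] at hB
    have hBT := hD B T ((wsum_mono hw hBS).trans hST)
    nlinarith
  have hsplit : ∑ n ∈ S, f n • e n =
      ∑ n ∈ S, max (f n) 0 • e n - ∑ n ∈ S, max (-f n) 0 • e n := by
    rw [← Finset.sum_sub_distrib]
    simp only [← sub_smul, max_zero_sub_eq_self]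
  have hpos := hpart (fun n => max (f n) 0) fun n hn =>
    ⟨le_max_right _ _, max_le (le_abs_self _ |>.trans (hf n hn)) ht⟩
  have hneg := hpart (fun n => max (-f n) 0) fun n hn =>
    ⟨le_max_right _ _, max_le (neg_le_abs _ |>.trans (hf n hn)) ht⟩
  rw [hsplit]
  linarith [norm_sub_le (∑ n ∈ S, max (f n) 0 • e n) (∑ n ∈ S, max (-f n) 0 • e n)]

/-- The multiplied vector is a nonnegative combination of greedy projections onto the superlevel
sets of `c`; remove the lowest level and induct. -/
theorem QuasiGreedy.norm_sum_mul_coeff_le_of_monotone (hQG : QuasiGreedy e E K) (hK : 0 ≤ K)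
    (z : X) {Γ : Finset ℕ} (hΓ : GreedySet E z Γ) {c : ℕ → ℝ} {γ : ℝ} (hγ : 0 ≤ γ)
    (hc : ∀ n ∈ Γ, 0 ≤ c n ∧ c n ≤ γ)
    (hmono : ∀ n ∈ Γ, ∀ m ∈ Γ, |E n z| ≤ |E m z| → c n ≤ c m) :
    ‖∑ n ∈ Γ, (c n * E n z) • e n‖ ≤ γ * (K * ‖z‖) := by
  induction Γ using Finset.strongInduction generalizing c γ with
  | H Γ ih =>
  rcases Γ.eq_empty_or_nonempty with rfl | hne
  · simp only [Finset.sum_empty, norm_zero]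
    positivity
  obtain ⟨n₀, hn₀, hmin⟩ := Γ.exists_min_image c hne
  set L := Γ.filter fun n => c n₀ < c n
  have hLΓ : L ⊂ Γ := Finset.filter_ssubset.2 ⟨n₀, hn₀, lt_irrefl _⟩
  have hL : GreedySet E z L := by
    intro n hn k hk
    obtain ⟨hnΓ, hcn⟩ := Finset.mem_filter.1 hn
    by_cases hkΓ : k ∈ Γ
    · have hck : c k ≤ c n₀ := not_lt.1 fun h => hk (Finset.mem_filter.2 ⟨hkΓ, h⟩)
      by_contra hlt
      linarith [hmono n hnΓ k hkΓ (not_le.1 hlt).le]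
    · exact hΓ n hnΓ k hkΓ
  have hsplit : ∑ n ∈ Γ, (c n * E n z) • e n =
      c n₀ • ∑ n ∈ Γ, E n z • e n + ∑ n ∈ L, ((c n - c n₀) * E n z) • e n := by
    rw [Finset.sum_filter_of_ne fun n _ h => lt_of_le_of_ne (hmin n ‹_›) fun heq => h (by
      rw [← heq, sub_self, zero_mul, zero_smul]), Finset.smul_sum, ← Finset.sum_add_distrib]
    refine Finset.sum_congr rfl fun n _ => ?_
    rw [smul_smul, ← add_smul]
    ring_nf
  have hhead : ‖c n₀ • ∑ n ∈ Γ, E n z • e n‖ ≤ c n₀ * (K * ‖z‖) := by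
    rw [norm_smul, Real.norm_of_nonneg (hc n₀ hn₀).1]
    exact mul_le_mul_of_nonneg_left (hQG z Γ hΓ) (hc n₀ hn₀).1
  have htail : ‖∑ n ∈ L, ((c n - c n₀) * E n z) • e n‖ ≤ (γ - c n₀) * (K * ‖z‖) :=
    ih L hLΓ hL (sub_nonneg.2 (hc n₀ hn₀).2)
      (fun n hn => ⟨sub_nonneg.2 (hmin n (hLΓ.subset hn)),
        sub_le_sub_right (hc n (hLΓ.subset hn)).2 _⟩)
      fun n hn m hm h => sub_le_sub_right (hmono n (hLΓ.subset hn) m (hLΓ.subset hm) h) _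
  rw [hsplit]
  linarith [norm_add_le (c n₀ • ∑ n ∈ Γ, E n z • e n) (∑ n ∈ L, ((c n - c n₀) * E n z) • e n)]

/-- Every subset of `T` is greedy for `v`, and the projections onto the parts of `T` where
`E n v = t` and `E n v = -t` are `± t` times indicator sums. -/
theorem QuasiGreedy.mul_norm_sum_le_of_abs_coeff_eq (hQG : QuasiGreedy e E K) {v : X} {t : ℝ}
    {T : Finset ℕ} (hle : ∀ k, |E k v| ≤ t) (heq : ∀ n ∈ T, |E n v| = t) :
    t * ‖∑ n ∈ T, e n‖ ≤ 2 * K * ‖v‖ := by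
  have ht : 0 ≤ t := (abs_nonneg _).trans (hle 0)
  have hgreedy : ∀ B ⊆ T, GreedySet E v B := fun B hB n hn k _ => (heq n (hB hn)).symm ▸ hle k
  set Tp := T.filter fun n => 0 < E n v
  set Tm := T.filter fun n => ¬ 0 < E n v
  have hp : ∑ n ∈ Tp, E n v • e n = t • ∑ n ∈ Tp, e n := by
    rw [Finset.smul_sum]
    refine Finset.sum_congr rfl fun n hn => ?_
    obtain ⟨hnT, hpos⟩ := Finset.mem_filter.1 hn
    rw [← heq n hnT, abs_of_pos hpos]
  have hm : ∑ n ∈ Tm, E n v • e n = -(t • ∑ n ∈ Tm, e n) := by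
    rw [Finset.smul_sum, ← Finset.sum_neg_distrib]
    refine Finset.sum_congr rfl fun n hn => ?_
    obtain ⟨hnT, hnpos⟩ := Finset.mem_filter.1 hn
    rw [← heq n hnT, abs_of_nonpos (not_lt.1 hnpos), neg_smul, neg_neg]
  have hsplit : t • ∑ n ∈ T, e n = ∑ n ∈ Tp, E n v • e n - ∑ n ∈ Tm, E n v • e n := by
    rw [hp, hm, ← Finset.sum_filter_add_sum_filter_not T (fun n => 0 < E n v), smul_add,
      sub_neg_eq_add]
  calc t * ‖∑ n ∈ T, e n‖ = ‖t • ∑ n ∈ T, e n‖ := by rw [norm_smul, Real.norm_of_nonneg ht]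
    _ ≤ ‖∑ n ∈ Tp, E n v • e n‖ + ‖∑ n ∈ Tm, E n v • e n‖ := hsplit ▸ norm_sub_le _ _
    _ ≤ K * ‖v‖ + K * ‖v‖ := add_le_add (hQG v Tp (hgreedy Tp (Finset.filter_subset _ _)))
        (hQG v Tm (hgreedy Tm (Finset.filter_subset _ _)))
    _ = 2 * K * ‖v‖ := by ring

/-- The vector with coefficients `t • sign (E n z)` on `Γ` differs from `P_Γ z` by a monotone
multiplier `1 - t / |E n z|`, so it has norm at most `2 K ‖z‖`. -/
theorem QuasiGreedy.mul_norm_sum_le_of_greedySet (hQG : QuasiGreedy e E K)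
    (hb : Biorthogonal e E) (hK : 0 ≤ K) {z : X} {Γ : Finset ℕ} (hΓ : GreedySet E z Γ) {t : ℝ}
    (ht : 0 < t) (htΓ : ∀ n ∈ Γ, t ≤ |E n z|) {T : Finset ℕ} (hT : T ⊆ Γ) :
    t * ‖∑ n ∈ T, e n‖ ≤ 4 * K ^ 2 * ‖z‖ := by
  have hpos : ∀ n ∈ Γ, 0 < |E n z| := fun n hn => ht.trans_le (htΓ n hn)
  set v := ∑ n ∈ Γ, (t / |E n z| * E n z) • e n
  have hv : ‖v‖ ≤ 2 * K * ‖z‖ := by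
    have hdiff : v = ∑ n ∈ Γ, E n z • e n - ∑ n ∈ Γ, ((1 - t / |E n z|) * E n z) • e n := by
      rw [← Finset.sum_sub_distrib]
      exact Finset.sum_congr rfl fun n _ => by rw [← sub_smul]; ring_nf
    have hmul := hQG.norm_sum_mul_coeff_le_of_monotone hK z hΓ zero_le_one
      (c := fun n => 1 - t / |E n z|)
      (fun n hn => ⟨sub_nonneg.2 ((div_le_one (hpos n hn)).2 (htΓ n hn)),
        sub_le_self _ (div_nonneg ht.le (abs_nonneg _))⟩)
      fun n hn m _ h => sub_le_sub_left (div_le_div_of_nonneg_left ht.le (hpos n hn) h) _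
    rw [hdiff]
    linarith [norm_sub_le (∑ n ∈ Γ, E n z • e n)
      (∑ n ∈ Γ, ((1 - t / |E n z|) * E n z) • e n), hQG z Γ hΓ]
  have hcoeff : ∀ n ∈ Γ, |t / |E n z| * E n z| = t := fun n hn => by
    rw [abs_mul, abs_div, abs_abs, abs_of_pos ht, div_mul_cancel₀ t (hpos n hn).ne']
  have hsign := hQG.mul_norm_sum_le_of_abs_coeff_eq (v := v) (T := T)
    (fun k => by
      rw [hb.apply_sum]
      split_ifs with hk
      · exact (hcoeff k hk).le
      · simpa using ht.le)
    fun n hn => by rw [hb.apply_sum, if_pos (hT hn), hcoeff n (hT hn)]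
  nlinarith

theorem Biorthogonal.sub_sum_eq (hb : Biorthogonal e E) {x z : X} {Λ A Γ : Finset ℕ}
    {c : ℕ → ℝ} (hz : z = x - ∑ n ∈ A, c n • e n) (hΓ : Γ ⊆ Λ ∪ A) :
    x - ∑ n ∈ Λ, E n x • e n = (z - ∑ n ∈ Γ, E n z • e n)
      - ∑ n ∈ (Λ ∪ A) \ Γ, E n z • e n + ∑ n ∈ A \ Λ, E n x • e n := by
  have hx : ∑ n ∈ Λ ∪ A, E n x • e n = ∑ n ∈ Λ, E n x • e n + ∑ n ∈ A \ Λ, E n x • e n := by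
    rw [← Finset.union_sdiff_self_eq_union, Finset.sum_union Finset.disjoint_sdiff]
  have hxz : ∑ n ∈ Λ ∪ A, E n x • e n =
      ∑ n ∈ Λ ∪ A, E n z • e n + ∑ n ∈ A, c n • e n := by
    rw [← hb.sum_apply_sum_of_subset Finset.subset_union_right c, ← Finset.sum_add_distrib]
    exact Finset.sum_congr rfl fun n _ => by rw [← add_smul, ← map_add, hz, sub_add_cancel]
  have hzΓ := Finset.sum_sdiff hΓ (f := fun n => E n z • e n)
  rw [hz] at hzΓ hxz ⊢
  linear_combination (norm := abel) hx - hxz + hzΓ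

theorem eq_empty_of_wsum_nonpos (hw : ∀ i, 0 < w i) {A : Finset ℕ} (hA : wsum w A ≤ 0) :
    A = ∅ := by
  by_contra hA0
  exact (Finset.sum_pos (fun i _ => hw i) (Finset.nonempty_iff_ne_empty.2 hA0)).not_ge hA

theorem greedySet_filter_le_abs {z : X} {t : ℝ} {U : Finset ℕ}
    (hout : ∀ k ∉ U, |E k z| ≤ t) : GreedySet E z (U.filter fun n => t ≤ |E n z|) := by
  intro n hn k hk
  have htn := (Finset.mem_filter.1 hn).2
  by_cases hkU : k ∈ U
  · exact (not_le.1 fun h => hk (Finset.mem_filter.2 ⟨hkU, h⟩)).le.trans htn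
  · exact (hout k hkU).trans htn

theorem norm_sum_smul_le_of_greedySet (hb : Biorthogonal e E) (hw : ∀ i, 0 ≤ w i)
    (hQG : QuasiGreedy e E K) (hD : WDemocratic w e D) (hK : 0 ≤ K) (hD0 : 0 ≤ D) {z : X}
    {Γ : Finset ℕ} (hΓ : GreedySet E z Γ) {t : ℝ} (ht : 0 ≤ t) (htΓ : ∀ n ∈ Γ, t ≤ |E n z|)
    {T : Finset ℕ} (hT : T ⊆ Γ) {S : Finset ℕ} {f : ℕ → ℝ} (hf : ∀ n ∈ S, |f n| ≤ t)
    (hST : wsum w S ≤ wsum w T) :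
    ‖∑ n ∈ S, f n • e n‖ ≤ 8 * D * K ^ 2 * ‖z‖ := by
  have hdem := hD.norm_sum_smul_le hw ht hf hST
  rcases ht.eq_or_lt with rfl | ht
  · rw [mul_zero, zero_mul] at hdem
    exact hdem.trans (by positivity)
  · have hind := hQG.mul_norm_sum_le_of_greedySet hb hK hΓ ht htΓ hT
    nlinarith

theorem norm_sub_greedy_le (hb : Biorthogonal e E) (hw : ∀ i, 0 < w i)
    (hQG : QuasiGreedy e E K) (hD : WDemocratic w e D) {x : X} {Λ : Finset ℕ}
    (hΛ : GreedySet E x Λ) {A : Finset ℕ} (hA : wsum w A ≤ wsum w (Λ \ A)) (c : ℕ → ℝ) :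
    ‖x - ∑ n ∈ Λ, E n x • e n‖ ≤ (1 + K + 16 * D * K ^ 2) * ‖x - ∑ n ∈ A, c n • e n‖ := by
  have hK := hQG.one_le hb
  have hD1 := hD.one_le hb
  have hw0 : ∀ i, 0 ≤ w i := fun i => (hw i).le
  rcases Λ.eq_empty_or_nonempty with rfl | hne
  · obtain rfl : A = ∅ := eq_empty_of_wsum_nonpos hw (by rwa [Finset.empty_sdiff] at hA)
    simp only [Finset.sum_empty, sub_zero]
    exact le_mul_of_one_le_left (norm_nonneg x) (by nlinarith)
  obtain ⟨n₀, hn₀, hmin⟩ := Λ.exists_min_image (fun n => |E n x|) hne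
  set t := |E n₀ x|
  set z := x - ∑ n ∈ A, c n • e n with hz
  have hzx : ∀ n ∉ A, E n z = E n x := fun n hn => by
    rw [hz, map_sub, hb.apply_sum, if_neg hn, sub_zero]
  have hout : ∀ k ∉ Λ, |E k x| ≤ t := fun k hk => hΛ n₀ hn₀ k hk
  set Γ := (Λ ∪ A).filter fun n => t ≤ |E n z|
  have hΓ : GreedySet E z Γ := greedySet_filter_le_abs fun k hk => by
    rw [Finset.mem_union, not_or] at hk
    exact hzx k hk.2 ▸ hout k hk.1
  have hΛΓ : Λ \ A ⊆ Γ := fun n hn => by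
    obtain ⟨hnΛ, hnA⟩ := Finset.mem_sdiff.1 hn
    exact Finset.mem_filter.2 ⟨Finset.mem_union_left A hnΛ, (hzx n hnA).symm ▸ hmin n hnΛ⟩
  have hUΓ : (Λ ∪ A) \ Γ ⊆ A := fun n hn => by
    obtain ⟨hnU, hnΓ⟩ := Finset.mem_sdiff.1 hn
    by_contra hnA
    exact hnΓ (hΛΓ (Finset.mem_sdiff.2 ⟨(Finset.mem_union.1 hnU).resolve_right hnA, hnA⟩))
  have hsmall : ∀ (S : Finset ℕ) (f : ℕ → ℝ), (∀ n ∈ S, |f n| ≤ t) → S ⊆ A →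
      ‖∑ n ∈ S, f n • e n‖ ≤ 8 * D * K ^ 2 * ‖z‖ := fun S f hf hSA =>
    norm_sum_smul_le_of_greedySet hb hw0 hQG hD (by linarith) (by linarith) hΓ (abs_nonneg _)
      (fun n hn => (Finset.mem_filter.1 hn).2) hΛΓ hf ((wsum_mono hw0 hSA).trans hA)
  have hhead : ‖z - ∑ n ∈ Γ, E n z • e n‖ ≤ (1 + K) * ‖z‖ := by
    linarith [norm_sub_le z (∑ n ∈ Γ, E n z • e n), hQG z Γ hΓ]
  have hmid := hsmall _ (fun n => E n z) (fun n hn => (not_le.1 fun h =>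
    (Finset.mem_sdiff.1 hn).2 (Finset.mem_filter.2 ⟨(Finset.mem_sdiff.1 hn).1, h⟩)).le) hUΓ
  have htail := hsmall (A \ Λ) (fun n => E n x) (fun n hn => hout n (Finset.mem_sdiff.1 hn).2)
    Finset.sdiff_subset
  rw [hb.sub_sum_eq hz (Finset.filter_subset (fun n => t ≤ |E n z|) (Λ ∪ A))]
  refine (norm_add_le _ _).trans ((add_le_add_left (norm_sub_le _ _) _).trans ?_)
  linarith

theorem le_mul_sigmaW {a C u : ℝ} (hC : 0 < C) (hu : 0 ≤ u) {x : X}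
    (h : ∀ (A : Finset ℕ) (c : ℕ → ℝ), wsum w A ≤ u → a ≤ C * ‖x - ∑ n ∈ A, c n • e n‖) :
    a ≤ C * sigmaW w e u x := by
  rw [← div_le_iff₀' hC]
  refine le_csInf ⟨‖x‖, ∅, fun _ => 0, by simpa [wsum] using hu, by simp⟩ ?_
  rintro r ⟨A, c, hA, rfl⟩
  exact (div_le_iff₀' hC).2 (h A c hA)

end GreedyBound

/-- for a `K`-quasi-greedy, `D`-`w`-democratic basis,
`‖x - G_m(x)‖ ≤ C(K,D) σ^w_{w(Λ_m)/2}(x)`, with `C` depending only on `K` and `D`. -/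
theorem stmt7 (K D : ℝ) :
    ∃ C : ℝ, ∀ (X : Type) [NormedAddCommGroup X] [NormedSpace ℝ X] [CompleteSpace X],
      ∀ (e : ℕ → X) (E : ℕ → X →L[ℝ] ℝ) (w : ℕ → ℝ),
        (∀ i, 0 < w i) → NormalizedBasis e E →
          QuasiGreedy e E K → WDemocratic w e D →
            ∀ (x : X) (Λ : Finset ℕ), GreedySet E x Λ →
              ‖x - ∑ n ∈ Λ, E n x • e n‖ ≤
                C * sigmaW w e (wsum w Λ / 2) x := by
  refine ⟨1 + K + 16 * D * K ^ 2, ?_⟩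
  intro X _ _ _ e E w hw hbasis hQG hD x Λ hΛ
  have hb := hbasis.biorthogonal
  have hK := hQG.one_le hb
  have hD1 := hD.one_le hb
  have hw0 : ∀ i, 0 ≤ w i := fun i => (hw i).le
  refine le_mul_sigmaW (by positivity) (div_nonneg (wsum_nonneg hw0 Λ) zero_le_two)
    fun A c hA => norm_sub_greedy_le hb hw hQG hD hΛ (wsum_le_wsum_sdiff_of_le_half hw0 hA) c
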